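/- arXiv:2012.13651 — 4 statements merged into one kernel-verified Lean document; each statement's English description precedes it below -/
import Mathlib

section
/- Let L be a complemented modular lattice of rank n with frame ⟨a₁,…,aₙ⟩ generated by a base of atoms, and define φ(p) := ⋁{aᵢ : p ∧ (a₁∨⋯∨aᵢ) covers p ∧ (a₁∨⋯∨a_{i−1})}. Then φ is order-preserving: p ≤ q implies φ(p) ≤ φ(q). -/
/-- For an atom `a`, `p ⊓ s ⋖ p ⊓ (a ⊔ s)` iff `a ≤ p ⊔ s` and `a ≰ s`. -/
lemma frameRetract_cov_iff {L : Type*} [Lattice L] [BoundedOrder L] [IsModularLattice L]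
    {a s p : L} (ha : IsAtom a) :
    (p ⊓ s) ⋖ (p ⊓ (a ⊔ s)) ↔ a ≤ p ⊔ s ∧ ¬ a ≤ s := by
  have hss : (a ⊔ s) ⊓ s = s := inf_eq_right.mpr le_sup_right
  have hts : p ⊓ (a ⊔ s) ⊓ s = p ⊓ s := by rw [inf_assoc, hss]
  constructor
  · intro h
    have hns : ¬ a ≤ s := by
      intro hs
      rw [sup_eq_right.mpr hs] at h
      exact h.lt.ne rfl
    have hst : s ⋖ a ⊔ s := by
      have h1 : a ⊓ s ⋖ a := by
        rw [(ha.2 _ (lt_of_le_of_ne inf_le_left (fun he => hns (he ▸ inf_le_right))))]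
        exact ha.bot_covBy
      exact covBy_sup_of_inf_covBy_left h1
    have hnle : ¬ p ⊓ (a ⊔ s) ≤ s := by
      intro hle
      have : p ⊓ (a ⊔ s) = p ⊓ s := by
        rw [← hts]; exact le_antisymm (le_inf le_rfl hle) inf_le_left
      exact h.lt.ne this.symm
    have hlt : s < (p ⊓ (a ⊔ s)) ⊔ s := by
      rcases lt_or_eq_of_le (le_sup_right : s ≤ (p ⊓ (a ⊔ s)) ⊔ s) with h' | h'
      · exact h'
      · exact absurd (sup_eq_right.mp h'.symm) hnle
    have hle2 : (p ⊓ (a ⊔ s)) ⊔ s ≤ a ⊔ s := sup_le inf_le_right le_sup_right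
    have heq : (p ⊓ (a ⊔ s)) ⊔ s = a ⊔ s := by
      by_contra hne
      exact hst.2 hlt (lt_of_le_of_ne hle2 hne)
    refine ⟨?_, hns⟩
    calc a ≤ a ⊔ s := le_sup_left
      _ = (p ⊓ (a ⊔ s)) ⊔ s := heq.symm
      _ ≤ p ⊔ s := sup_le_sup_right inf_le_left _
  · rintro ⟨h1, h2⟩
    have heq : (p ⊓ (a ⊔ s)) ⊔ s = a ⊔ s := by
      apply le_antisymm (sup_le inf_le_right le_sup_right)
      have hmod : (s ⊔ p) ⊓ (a ⊔ s) = s ⊔ (p ⊓ (a ⊔ s)) :=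
        sup_inf_assoc_of_le p le_sup_right
      have ha' : a ≤ s ⊔ (p ⊓ (a ⊔ s)) := by
        rw [← hmod]
        exact le_inf (by rwa [sup_comm]) le_sup_left
      have hs' : s ≤ s ⊔ (p ⊓ (a ⊔ s)) := le_sup_left
      rw [sup_comm (p ⊓ (a ⊔ s)) s]
      exact sup_le ha' hs'
    have hcov : s ⋖ (p ⊓ (a ⊔ s)) ⊔ s := by
      rw [heq]
      have h1' : a ⊓ s ⋖ a := by
        rw [(ha.2 _ (lt_of_le_of_ne inf_le_left (fun he => h2 (he ▸ inf_le_right))))]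
        exact ha.bot_covBy
      exact covBy_sup_of_inf_covBy_left h1'
    have := inf_covBy_of_covBy_sup_right (a := p ⊓ (a ⊔ s)) (b := s) hcov
    rwa [hts] at this

open scoped Classical in
/-- The canonical retraction onto the frame generated by atoms `a₁, …, aₙ`:
`φ(p) = ⋁ {aᵢ : p ⊓ (a₁ ∨ ⋯ ∨ aᵢ) covers p ⊓ (a₁ ∨ ⋯ ∨ a_{i−1})}`. -/
noncomputable def frameRetract {L : Type*} [Lattice L] [BoundedOrder L] {n : ℕ}
    (a : Fin n → L) (p : L) : L :=
  (Finset.univ.filter fun i : Fin n =>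
    (p ⊓ (Finset.Iio i).sup a) ⋖ (p ⊓ (Finset.Iic i).sup a)).sup a

/-- Let `L` be a complemented modular lattice of rank `n` with a frame generated by a
base of atoms `a₁, …, aₙ`. The canonical retraction `φ` is order-preserving. -/
theorem frameRetract_mono {L : Type*} [Lattice L] [BoundedOrder L]
    [IsModularLattice L] [ComplementedLattice L] {n : ℕ}
    (hrank : Order.height (⊤ : L) = n)
    (a : Fin n → L) (hatom : ∀ i, IsAtom (a i))
    (hbase : Finset.univ.sup a = ⊤)
    {p q : L} (hpq : p ≤ q) :
    frameRetract a p ≤ frameRetract a q := by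
  classical
  unfold frameRetract
  apply Finset.sup_mono
  intro i hi
  simp only [Finset.mem_filter, Finset.mem_univ, true_and] at hi ⊢
  have hIic : (Finset.Iic i).sup a = a i ⊔ (Finset.Iio i).sup a := by
    rw [← Finset.Iio_insert, Finset.sup_insert]
  rw [hIic, frameRetract_cov_iff (hatom i)] at hi ⊢
  exact ⟨hi.1.trans (sup_le_sup_right hpq _), hi.2⟩
end

section
/- Let L be a complemented modular lattice of rank n with frame ⟨a₁,…,aₙ⟩, and define φ(p) := ⋁{aᵢ : p ∧ (a₁∨⋯∨aᵢ) covers p ∧ (a₁∨⋯∨a_{i−1})}. Then φ is rank-preserving: r(φ(p)) = r(p) for all p ∈ L. -/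
/-!
Meeting `p` with the chain of partial joins `Aₖ = a₁ ⊔ ⋯ ⊔ aₖ` from `⊥` to `⊤` gives, by
modularity, a chain from `⊥` to `p` whose steps are equalities or coverings. In a modular lattice
a covering raises the height by exactly one, so `r(p)` is the number of indices `i` at which
`p ⊓ Aᵢ₋₁ ⋖ p ⊓ Aᵢ`. Since the `n` atoms join to `⊤`, which has height `n`, the join of any `k`
of them has height `k`; in particular `r(φ(p))` is the same number.
-/

open Order Finset

section Modular

variable {L : Type*} [Lattice L] [IsModularLattice L]

theorem WCovBy.inf_left {u v : L} (h : u ⩿ v) (x : L) : x ⊓ u ⩿ x ⊓ v := by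
  refine wcovBy_iff_le_and_eq_or_eq.2 ⟨inf_le_inf_left x h.le, fun z hlo hhi => ?_⟩
  have hzx : z ≤ x := hhi.trans inf_le_left
  rcases h.eq_or_eq (le_sup_left : u ≤ u ⊔ z) (sup_le h.le (hhi.trans inf_le_right))
    with hzu | hzu
  · exact .inl <| le_antisymm (le_inf hzx (le_sup_right.trans hzu.le)) hlo
  · refine .inr ?_
    rw [← hzu, inf_comm, sup_comm, sup_inf_assoc_of_le u hzx, inf_comm]
    exact (sup_eq_left.2 hlo).symm

theorem IsAtom.wcovBy_sup [OrderBot L] {c : L} (hc : IsAtom c) (x : L) : x ⩿ x ⊔ c := by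
  by_cases hcx : c ≤ x
  · rw [sup_eq_left.2 hcx]
    exact .rfl
  · have hbot : c ⊓ x = ⊥ := (hc.not_le_iff_disjoint.1 hcx).eq_bot
    rw [sup_comm]
    exact (covBy_sup_of_inf_covBy_left (hbot ▸ hc.bot_covBy)).wcovBy

theorem CovBy.height_le_coe_add_one : ∀ (m : ℕ) {a b : L}, a ⋖ b → height a ≤ m →
    height b ≤ m + 1
  | m, a, b, hab, ha => by
    rw [← Nat.cast_add_one, height_le_coe_iff]
    intro y hy
    rcases (hab.wcovBy.inf_left y).eq_or_covBy with hya | hcov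
    · rw [inf_eq_left.2 hy.le] at hya
      calc height y ≤ height a := height_mono (hya ▸ inf_le_right)
        _ < m + 1 := ha.trans_lt (ENat.natCast_lt_natCast.2 m.lt_succ_self)
    -- `y ≰ a`: then `y ⊓ a ⋖ y` with `y ⊓ a < a`, a covering pair one step lower.
    rw [inf_eq_left.2 hy.le] at hcov
    have hlt : y ⊓ a < a := inf_lt_right.2 fun hay =>
      hcov.lt.ne <| inf_eq_left.2 (hay.lt_or_eq.resolve_left fun h => hab.2 h hy).ge
    have hm := (height_add_one_le hlt).trans ha
    cases m with
    | zero => simp at hm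
    | succ k =>
      have := CovBy.height_le_coe_add_one k hcov (by simpa using hm)
      exact this.trans_lt (by norm_cast; omega)

theorem CovBy.height_le_add_one {a b : L} (hab : a ⋖ b) : height b ≤ height a + 1 := by
  cases h : height a with
  | top => simp
  | coe m => exact hab.height_le_coe_add_one m h.le

theorem WCovBy.height_le_add_one {a b : L} (hab : a ⩿ b) : height b ≤ height a + 1 := by
  rcases hab.eq_or_covBy with rfl | hcov
  · exact le_self_add
  · exact hcov.height_le_add_one

open scoped Classical in
theorem height_eq_card_covBy_of_wcovBy [OrderBot L] {c : ℕ → L} (h0 : c 0 = ⊥) (m : ℕ)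
    (h : ∀ k < m, c k ⩿ c (k + 1)) : height (c m) = #{k ∈ range m | c k ⋖ c (k + 1)} := by
  induction m with
  | zero => simp [h0]
  | succ m ih =>
    rw [range_add_one, filter_insert]
    rcases (h m (by omega)).eq_or_covBy with heq | hcov
    · rw [if_neg fun hc => hc.lt.ne heq, ← heq, ih fun k hk => h k (by omega)]
    · rw [if_pos hcov, card_insert_of_notMem (by simp), Nat.cast_add_one,
        ← ih fun k hk => h k (by omega)]
      exact le_antisymm hcov.height_le_add_one (height_add_one_le hcov.lt)

theorem height_sup_finsetSup_le [OrderBot L] {ι : Type*} {a : ι → L}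
    (ha : ∀ i, IsAtom (a i)) (s : Finset ι) (x : L) : height (x ⊔ s.sup a) ≤ height x + #s := by
  induction s using Finset.cons_induction generalizing x with
  | empty => simp
  | cons j s hj ih =>
    rw [sup_cons, ← sup_assoc, card_cons, Nat.cast_add_one, ← add_assoc, add_right_comm]
    calc height (x ⊔ a j ⊔ s.sup a) ≤ height (x ⊔ a j) + #s := ih _
      _ ≤ height x + 1 + #s := by gcongr; exact ((ha j).wcovBy_sup x).height_le_add_one

theorem height_finsetSup_eq_card [BoundedOrder L] {ι : Type*} [Fintype ι] {a : ι → L}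
    (ha : ∀ i, IsAtom (a i)) (hbase : univ.sup a = ⊤)
    (hrank : height (⊤ : L) = Fintype.card ι)
    (s : Finset ι) : height (s.sup a) = #s := by
  classical
  have hle : height (s.sup a) ≤ #s := by simpa using height_sup_finsetSup_le ha s ⊥
  have hge : Fintype.card ι ≤ height (s.sup a) + #sᶜ := by
    have := height_sup_finsetSup_le ha sᶜ (s.sup a)
    rwa [← sup_union, union_compl, hbase, hrank] at this
  obtain ⟨h, hh⟩ : ∃ h : ℕ, height (s.sup a) = h :=
    ⟨_, (ENat.natCast_toNat (ne_top_of_le_ne_top (by simp) hle)).symm⟩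
  rw [hh] at hle hge ⊢
  rw [card_compl] at hge
  have := card_le_univ s
  norm_cast at hle hge ⊢
  omega

end Modular

section PrefixSup

variable {L : Type*} [SemilatticeSup L] [OrderBot L] {n : ℕ} (a : Fin n → L)

def prefixSup (k : ℕ) : L := ({i | (i : ℕ) < k} : Finset (Fin n)).sup a

@[simp]
theorem prefixSup_zero : prefixSup a 0 = ⊥ := by simp [prefixSup]

theorem prefixSup_add_one {k : ℕ} (hk : k < n) :
    prefixSup a (k + 1) = prefixSup a k ⊔ a ⟨k, hk⟩ := by
  have : ({i | (i : ℕ) < k + 1} : Finset (Fin n)) =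
      insert ⟨k, hk⟩ ({i | (i : ℕ) < k} : Finset (Fin n)) := by
    ext i
    simp [Fin.ext_iff, le_iff_eq_or_lt]
  rw [prefixSup, this, sup_insert, sup_comm, prefixSup]

theorem prefixSup_self : prefixSup a n = univ.sup a := by
  simp [prefixSup]

theorem sup_Iio_eq_prefixSup (i : Fin n) : (Iio i).sup a = prefixSup a i := by
  congr 1
  ext j
  simp

theorem sup_Iic_eq_prefixSup (i : Fin n) : (Iic i).sup a = prefixSup a (i + 1) := by
  congr 1
  ext j
  simp

end PrefixSup

open scoped Classical in
theorem height_eq_card_covBy_inf_prefixSup {L : Type*} [Lattice L] [BoundedOrder L]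
    [IsModularLattice L] {n : ℕ} {a : Fin n → L} (ha : ∀ i, IsAtom (a i))
    (hbase : univ.sup a = ⊤) (p : L) :
    height p = #{i : Fin n | p ⊓ (Iio i).sup a ⋖ p ⊓ (Iic i).sup a} := by
  have hchain := height_eq_card_covBy_of_wcovBy (c := fun k => p ⊓ prefixSup a k) (by simp) n
    fun k hk => by simpa only [prefixSup_add_one a hk] using ((ha _).wcovBy_sup _).inf_left p
  rw [prefixSup_self, hbase, inf_top_eq] at hchain
  rw [hchain, card_filter, card_filter, ← Fin.sum_univ_eq_sum_range]
  simp only [sup_Iio_eq_prefixSup, sup_Iic_eq_prefixSup]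

theorem frameRetract_rank_preserving_general {L : Type*} [Lattice L] [BoundedOrder L]
    [IsModularLattice L] {n : ℕ}
    (hrank : Order.height (⊤ : L) = n)
    (a : Fin n → L) (hatom : ∀ i, IsAtom (a i))
    (hbase : Finset.univ.sup a = ⊤)
    (p : L) :
    Order.height (frameRetract a p) = Order.height p := by
  rw [frameRetract, height_finsetSup_eq_card hatom hbase (by rwa [Fintype.card_fin]),
    height_eq_card_covBy_inf_prefixSup hatom hbase p]

/-- Let `L` be a complemented modular lattice of rank `n` with a frame generated by a
base of atoms `a₁, …, aₙ`. The canonical retraction `φ` is rank-preserving, where the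
rank of `p` is the maximum length of a chain from `⊥` to `p` (the order-theoretic
height of `p`). -/
theorem frameRetract_rank_preserving {L : Type*} [Lattice L] [BoundedOrder L]
    [IsModularLattice L] [ComplementedLattice L] {n : ℕ}
    (hrank : Order.height (⊤ : L) = n)
    (a : Fin n → L) (hatom : ∀ i, IsAtom (a i))
    (hbase : Finset.univ.sup a = ⊤)
    (p : L) :
    Order.height (frameRetract a p) = Order.height p :=
  frameRetract_rank_preserving_general hrank a hatom hbase p
end

section
/- For any two chains C and D in a complemented modular lattice L of rank n, there exists a base {a₁,…,aₙ} of atoms such that the frame ⟨a₁,…,aₙ⟩ generated by it contains both C and D. -/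
/-!
Induct on the height of `t`, building a base of `t` that carries two chains `C, D ⊆ Iic t`.
Take a coatom `c ⋖ t` above every element of `C` other than `t`, and let `e` be the least
element of `D` not below `c` (or `t` if there is none). By modularity `e ⊓ c ⋖ e`, so a
complement of `e ⊓ c` inside `e` is an atom `b ≤ e` with `b ≰ c`. A base of `c` carrying the
chains `C ⊓ c` and `D ⊓ c` extends by `b` to a base of `t`: every `x` in `C ∪ D` either lies
below `c` or lies above `b`, and then `x = (x ⊓ c) ⊔ b` because `x ⊓ c ⋖ x`. The base of `c`
has the right size since in a modular lattice a cover raises the height by exactly one.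
-/

open Order Finset

section Height

variable {α : Type*} [Lattice α] [IsModularLattice α]

theorem height_le_height_add_one_of_covBy {a b : α} (h : a ⋖ b) : height b ≤ height a + 1 := by
  suffices ∀ k : ℕ∞, ∀ a b : α, height a = k → a ⋖ b → height b ≤ height a + 1 from
    this _ a b rfl h
  intro k
  induction k using WellFoundedLT.induction with
  | _ k ih =>
    rintro a b rfl hab
    by_cases hfin : height a = ⊤
    · simp [hfin]
    rw [height_eq_iSup_lt_height b]
    refine iSup₂_le fun y hyb => add_le_add_left ?_ 1
    by_cases hya : y ≤ a
    · exact height_mono hya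
    -- modularity carries the cover `a ⋖ a ⊔ y` down to `a ⊓ y ⋖ y`, with `a ⊓ y` below `a`
    have hsup : a ⊔ y = b := (hab.eq_or_eq le_sup_left (sup_le hab.le hyb.le)).resolve_left
      fun h => hya (h ▸ le_sup_right)
    have hlt : a ⊓ y < a := inf_le_left.lt_of_ne fun h =>
      hya ((hab.eq_or_eq (inf_eq_left.1 h) hyb.le).elim le_of_eq fun h => (hyb.ne h).elim)
    have hdec : height (a ⊓ y) < height a :=
      height_strictMono hlt ((height_mono hlt.le).trans_lt (lt_top_iff_ne_top.2 hfin))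
    calc height y ≤ height (a ⊓ y) + 1 :=
          ih _ hdec _ _ rfl (inf_covBy_of_covBy_sup_left (hsup ▸ hab))
      _ ≤ height a := height_add_one_le hlt

theorem height_eq_height_add_one_of_covBy {a b : α} (h : a ⋖ b) :
    height b = height a + 1 :=
  (height_le_height_add_one_of_covBy h).antisymm (height_add_one_le h.lt)

end Height

section WellFounded

variable {α : Type*} [PartialOrder α]

theorem wellFoundedLT_of_height_top_ne_top [OrderTop α] (h : height (⊤ : α) ≠ ⊤) :
    WellFoundedLT α :=
  StrictMono.wellFoundedLT (f := height) fun _ _ hxy =>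
    height_strictMono hxy ((height_mono le_top).trans_lt h.lt_top)

theorem wellFoundedGT_of_height_top_ne_top [BoundedOrder α] (h : height (⊤ : α) ≠ ⊤) :
    WellFoundedGT α := by
  have hbot : coheight (⊥ : α) = height (⊤ : α) := by
    exact_mod_cast coheight_bot_eq_krullDim.trans height_top_eq_krullDim.symm
  exact StrictAnti.wellFoundedGT (f := coheight) fun _ _ hxy =>
    coheight_strictAnti hxy ((coheight_anti bot_le).trans_lt (hbot ▸ h.lt_top))

end WellFounded

theorem IsChain.exists_isLeast {α : Type*} [PartialOrder α] [WellFoundedLT α] {s : Set α}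
    (hs : IsChain (· ≤ ·) s) (hne : s.Nonempty) : ∃ a, IsLeast s a := by
  obtain ⟨a, ha, hmin⟩ := wellFounded_lt.has_min s hne
  refine ⟨a, ha, fun x hx => ?_⟩
  rcases eq_or_ne a x with rfl | hax
  · rfl
  · exact (hs.total ha hx).resolve_right fun hxa => hmin x hx (hxa.lt_of_ne hax.symm)

theorem IsChain.exists_isGreatest {α : Type*} [PartialOrder α] [WellFoundedGT α] {s : Set α}
    (hs : IsChain (· ≤ ·) s) (hne : s.Nonempty) : ∃ a, IsGreatest s a :=
  IsChain.exists_isLeast (α := αᵒᵈ) hs.symm hne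

section Modular

variable {α : Type*} [Lattice α] [IsModularLattice α] {b c t x : α}

theorem CovBy.inf_covBy_of_le_of_not_le (hct : c ⋖ t) (hxt : x ≤ t) (hxc : ¬ x ≤ c) :
    x ⊓ c ⋖ x := by
  have hsup : c ⊔ x = t := (hct.eq_or_eq le_sup_left (sup_le hct.le hxt)).resolve_left
    fun h => hxc (h ▸ le_sup_right)
  rw [inf_comm]
  exact inf_covBy_of_covBy_sup_left (hsup ▸ hct)

theorem CovBy.inf_sup_eq_of_le (hct : c ⋖ t) (hxt : x ≤ t) (hbx : b ≤ x) (hbc : ¬ b ≤ c) :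
    x ⊓ c ⊔ b = x :=
  ((hct.inf_covBy_of_le_of_not_le hxt fun hxc => hbc (hbx.trans hxc)).eq_or_eq le_sup_left
    (sup_le inf_le_left hbx)).resolve_left fun h => hbc (h ▸ le_sup_right |>.trans inf_le_right)

theorem CovBy.exists_isAtom_le_not_le [BoundedOrder α] [ComplementedLattice α] {a b : α}
    (h : a ⋖ b) : ∃ x, IsAtom x ∧ x ≤ b ∧ ¬ x ≤ a := by
  obtain ⟨a', ha'⟩ := exists_isCompl a
  have hsup : a ⊔ a' ⊓ b = b := by
    rw [← sup_inf_assoc_of_le a' h.le, ha'.sup_eq_top, top_inf_eq]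
  have hinf : a ⊓ (a' ⊓ b) = ⊥ := by rw [← inf_assoc, ha'.inf_eq_bot, bot_inf_eq]
  have hatom : IsAtom (a' ⊓ b) :=
    bot_covBy_iff.1 (hinf ▸ inf_covBy_of_covBy_sup_left (hsup.symm ▸ h))
  exact ⟨a' ⊓ b, hatom, inf_le_right, fun hle => hatom.1 (hinf ▸ (inf_eq_right.2 hle).symm)⟩

end Modular

theorem IsChain.exists_covBy_forall_eq_or_le {α : Type*} [PartialOrder α] [OrderBot α]
    [WellFoundedGT α] {C : Set α} (hC : IsChain (· ≤ ·) C) {t : α} (hCt : C ⊆ Set.Iic t)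
    (ht : ⊥ < t) : ∃ c, c ⋖ t ∧ ∀ x ∈ C, x = t ∨ x ≤ c := by
  have hchain : IsChain (· ≤ ·) (insert ⊥ (C ∩ Set.Iio t)) :=
    (hC.mono Set.inter_subset_left).insert fun _ _ _ => Or.inl bot_le
  obtain ⟨s, hs, hsmax⟩ := hchain.exists_isGreatest (Set.insert_nonempty _ _)
  have hst : s < t := by
    rcases hs with rfl | ⟨-, hst⟩
    exacts [ht, hst]
  obtain ⟨c, hsc, hct⟩ := exists_le_covBy_of_lt hst
  refine ⟨c, hct, fun x hx => (hCt hx).eq_or_lt.imp_right fun hxt => ?_⟩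
  exact (hsmax (Or.inr ⟨hx, hxt⟩)).trans hsc

theorem IsChain.exists_isAtom_forall_le_or_le {α : Type*} [Lattice α] [BoundedOrder α]
    [IsModularLattice α] [ComplementedLattice α] [WellFoundedLT α] {D : Set α}
    (hD : IsChain (· ≤ ·) D) {c t : α} (hDt : D ⊆ Set.Iic t) (hct : c ⋖ t) :
    ∃ b, IsAtom b ∧ b ≤ t ∧ ¬ b ≤ c ∧ ∀ x ∈ D, x ≤ c ∨ b ≤ x := by
  have hchain : IsChain (· ≤ ·) (insert t {x ∈ D | ¬ x ≤ c}) :=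
    (hD.mono (Set.sep_subset _ _)).insert fun x hx _ => Or.inr (hDt hx.1)
  obtain ⟨e, he, hemin⟩ := hchain.exists_isLeast (Set.insert_nonempty _ _)
  have het : e ≤ t := hemin (Set.mem_insert _ _)
  have hec : ¬ e ≤ c := by
    rcases he with rfl | ⟨-, hec⟩
    exacts [hct.lt.not_ge, hec]
  obtain ⟨b, hb, hbe, hbec⟩ := (hct.inf_covBy_of_le_of_not_le het hec).exists_isAtom_le_not_le
  refine ⟨b, hb, hbe.trans het, fun hbc => hbec (le_inf hbe hbc), fun x hx => ?_⟩
  by_cases hxc : x ≤ c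
  exacts [Or.inl hxc, Or.inr (hbe.trans (hemin (Or.inr ⟨hx, hxc⟩)))]

section Frame

variable {α : Type*} [SemilatticeSup α] [OrderBot α]

/-- The joins of subfamilies of `a`; for a base of atoms this is the frame it generates. -/
def frame {ι : Type*} (a : ι → α) : Set α := {x | ∃ S : Finset ι, x = S.sup a}

variable {m : ℕ} (b : α) (a : Fin m → α)

theorem Fin.sup_insert_zero_map_succEmb_cons (S : Finset (Fin m)) :
    (insert 0 (S.map (Fin.succEmb m))).sup (Fin.cons b a : Fin (m + 1) → α) = S.sup a ⊔ b := by
  rw [sup_insert, sup_map, sup_comm]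
  rfl

theorem Fin.sup_univ_cons : univ.sup (Fin.cons b a : Fin (m + 1) → α) = univ.sup a ⊔ b := by
  rw [← Fin.sup_insert_zero_map_succEmb_cons, Fin.univ_succ, cons_eq_insert]
  rfl

theorem frame_subset_frame_cons : frame a ⊆ frame (Fin.cons b a : Fin (m + 1) → α) := by
  rintro _ ⟨S, rfl⟩
  exact ⟨S.map (Fin.succEmb m), by rw [sup_map]; rfl⟩

theorem sup_mem_frame_cons {x : α} (hx : x ∈ frame a) :
    x ⊔ b ∈ frame (Fin.cons b a : Fin (m + 1) → α) := by
  obtain ⟨S, rfl⟩ := hx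
  exact ⟨_, (Fin.sup_insert_zero_map_succEmb_cons b a S).symm⟩

end Frame

theorem CovBy.mem_frame_cons {α : Type*} [Lattice α] [OrderBot α] [IsModularLattice α] {m : ℕ}
    {a : Fin m → α} {b c t x : α} (hct : c ⋖ t) (hbc : ¬ b ≤ c) (hxt : x ≤ t)
    (hx : x ≤ c ∨ b ≤ x) (hxa : x ⊓ c ∈ frame a) :
    x ∈ frame (Fin.cons b a : Fin (m + 1) → α) := by
  rcases hx with hxc | hbx
  · exact frame_subset_frame_cons b a (inf_eq_left.2 hxc ▸ hxa)
  · exact hct.inf_sup_eq_of_le hxt hbx hbc ▸ sup_mem_frame_cons b a hxa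

theorem exists_isAtom_sup_eq_and_subset_frame {α : Type*} [Lattice α] [BoundedOrder α]
    [IsModularLattice α] [ComplementedLattice α] [WellFoundedLT α] [WellFoundedGT α] (m : ℕ)
    {t : α} (ht : height t = m) {C D : Set α} (hC : IsChain (· ≤ ·) C)
    (hD : IsChain (· ≤ ·) D) (hCt : C ⊆ Set.Iic t) (hDt : D ⊆ Set.Iic t) :
    ∃ a : Fin m → α, (∀ i, IsAtom (a i)) ∧ univ.sup a = t ∧ C ∪ D ⊆ frame a := by
  induction m generalizing t C D with
  | zero =>
    obtain rfl : t = ⊥ := (height_eq_zero.1 ht).eq_bot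
    refine ⟨Fin.elim0, fun i => i.elim0, by simp, fun x hx => ⟨∅, ?_⟩⟩
    simpa using Set.union_subset hCt hDt hx
  | succ m ih =>
    have htbot : ⊥ < t := bot_lt_iff_ne_bot.2 fun h => by
      rw [h, height_bot] at ht
      norm_cast at ht
    obtain ⟨c, hct, hCc⟩ := hC.exists_covBy_forall_eq_or_le hCt htbot
    obtain ⟨b, hb, hbt, hbc, hDb⟩ := hD.exists_isAtom_forall_le_or_le hDt hct
    have hc : height c = m := by
      rw [height_eq_height_add_one_of_covBy hct, Nat.cast_succ] at ht
      exact WithTop.add_right_cancel ENat.one_ne_top ht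
    have hmono : Monotone (· ⊓ c) := fun _ _ h => inf_le_inf_right c h
    have hIic : ∀ s : Set α, (· ⊓ c) '' s ⊆ Set.Iic c :=
      fun s => Set.image_subset_iff.2 fun _ _ => inf_le_right
    obtain ⟨a, ha, hac, haCD⟩ :=
      ih hc (hmono.isChain_image hC) (hmono.isChain_image hD) (hIic C) (hIic D)
    refine ⟨Fin.cons b a, Fin.cases hb ha, ?_, ?_⟩
    · rw [Fin.sup_univ_cons, hac, ← inf_eq_right.2 hct.le, hct.inf_sup_eq_of_le le_rfl hbt hbc]
    · rintro x (hx | hx)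
      · exact hct.mem_frame_cons hbc (hCt hx) ((hCc x hx).symm.imp_right fun h => hbt.trans h.ge)
          (haCD (Or.inl ⟨x, hx, rfl⟩))
      · exact hct.mem_frame_cons hbc (hDt hx) (hDb x hx) (haCD (Or.inr ⟨x, hx, rfl⟩))

/-- For any two chains `C` and `D` in a complemented modular lattice `L` of rank `n`,
there exists a base `{a₁, …, aₙ}` of atoms such that the frame generated by it (the
set of joins of subsets of the base) contains both `C` and `D`. -/
theorem exists_frame_containing_two_chains {L : Type*} [Lattice L] [BoundedOrder L]
    [IsModularLattice L] [ComplementedLattice L] {n : ℕ}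
    (hrank : Order.height (⊤ : L) = n)
    (C D : Set L) (hC : IsChain (· ≤ ·) C) (hD : IsChain (· ≤ ·) D) :
    ∃ a : Fin n → L, (∀ i, IsAtom (a i)) ∧ Finset.univ.sup a = ⊤ ∧
      ∀ x ∈ C ∪ D, ∃ S : Finset (Fin n), x = S.sup a := by
  have hfin : height (⊤ : L) ≠ ⊤ := hrank ▸ ENat.natCast_ne_top n
  have := wellFoundedLT_of_height_top_ne_top hfin
  have := wellFoundedGT_of_height_top_ne_top hfin
  exact exists_isAtom_sup_eq_and_subset_frame n hrank hC hD (fun _ _ => le_top) fun _ _ => le_top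
end

section
/- Let V, W be finite-dimensional vector spaces over a field K and B: V × W → K a bilinear form. For subspaces X ⊆ V and Y ⊆ W, let R(X,Y) := rank of the restriction of B to X × Y. Then R is submodular: R(X,Y) + R(X',Y') ≥ R(X∩X', Y+Y') + R(X+X', Y∩Y') for all subspaces X,X' of V and Y,Y' of W. -/
/-- The rank of the restriction of a bilinear form `B : V × W → K` to `X × Y`,
i.e. the rank of the induced linear map `X → Y*`. -/
noncomputable def bilinRestrictRank {K V W : Type*} [Field K]
    [AddCommGroup V] [Module K V] [AddCommGroup W] [Module K W]
    (B : V →ₗ[K] W →ₗ[K] K) (X : Submodule K V) (Y : Submodule K W) : ℕ :=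
  Module.finrank K (LinearMap.range (B.domRestrict₁₂ X Y))

section Aux

variable {K V W : Type*} [Field K]
    [AddCommGroup V] [Module K V] [AddCommGroup W] [Module K W]
    (B : V →ₗ[K] W →ₗ[K] K)

/-- Left orthogonal complement of `Y` w.r.t. `B`. -/
noncomputable def bperp (Y : Submodule K W) : Submodule K V :=
  Submodule.comap B Y.dualAnnihilator

lemma bperp_antitone {Y Y' : Submodule K W} (h : Y ≤ Y') :
    bperp B Y' ≤ bperp B Y :=
  Submodule.comap_mono (Submodule.dualAnnihilator_anti h)

lemma bperp_sup (Y Y' : Submodule K W) :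
    bperp B (Y ⊔ Y') = bperp B Y ⊓ bperp B Y' := by
  simp [bperp, Submodule.dualAnnihilator_sup_eq, Submodule.comap_inf]

lemma ker_domRestrict₁₂ (X : Submodule K V) (Y : Submodule K W) :
    LinearMap.ker (B.domRestrict₁₂ X Y)
      = Submodule.comap X.subtype (X ⊓ bperp B Y) := by
  ext x
  simp only [LinearMap.mem_ker, Submodule.mem_comap, Submodule.mem_inf,
    Submodule.coe_subtype, bperp, Submodule.mem_dualAnnihilator]
  constructor
  · intro h
    exact ⟨x.2, fun w hw => by
      have := congrArg (fun f => f ⟨w, hw⟩) h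
      simpa [LinearMap.domRestrict₁₂_apply] using this⟩
  · intro h
    ext y
    simpa [LinearMap.domRestrict₁₂_apply] using h.2 y y.2

lemma rank_add_eq [FiniteDimensional K V] (X : Submodule K V) (Y : Submodule K W) :
    bilinRestrictRank B X Y
      + Module.finrank K (X ⊓ bperp B Y : Submodule K V) = Module.finrank K X := by
  have h := LinearMap.finrank_range_add_finrank_ker (B.domRestrict₁₂ X Y)
  rw [ker_domRestrict₁₂] at h
  rw [bilinRestrictRank, ← h]
  congr 1
  exact ((Submodule.comapSubtypeEquivOfLe inf_le_left).finrank_eq).symm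

end Aux

/-- For a bilinear form `B` on finite-dimensional spaces `V, W`, the rank `R(X,Y)` of
its restriction to subspaces is submodular:
`R(X,Y) + R(X',Y') ≥ R(X∩X', Y+Y') + R(X+X', Y∩Y')`. -/
theorem bilinRestrictRank_submodular {K V W : Type*} [Field K]
    [AddCommGroup V] [Module K V] [FiniteDimensional K V]
    [AddCommGroup W] [Module K W] [FiniteDimensional K W]
    (B : V →ₗ[K] W →ₗ[K] K)
    (X X' : Submodule K V) (Y Y' : Submodule K W) :
    bilinRestrictRank B (X ⊓ X') (Y ⊔ Y') + bilinRestrictRank B (X ⊔ X') (Y ⊓ Y')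
      ≤ bilinRestrictRank B X Y + bilinRestrictRank B X' Y' := by
  set A := bperp B Y with hA
  set A' := bperp B Y' with hA'
  set P := X ⊓ A with hP
  set Q := X' ⊓ A' with hQ
  have h1 := rank_add_eq B X Y
  have h2 := rank_add_eq B X' Y'
  rw [← hA, ← hP] at h1
  rw [← hA', ← hQ] at h2
  have h3 := rank_add_eq B (X ⊓ X') (Y ⊔ Y')
  have h4 := rank_add_eq B (X ⊔ X') (Y ⊓ Y')
  have hsup : Module.finrank K (X ⊔ X' : Submodule K V)
      + Module.finrank K (X ⊓ X' : Submodule K V)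
      = Module.finrank K X + Module.finrank K X' :=
    Submodule.finrank_sup_add_finrank_inf_eq X X'
  -- relate the perp terms
  have hr : (X ⊓ X') ⊓ bperp B (Y ⊔ Y') = P ⊓ Q := by
    rw [bperp_sup, hP, hQ, ← hA, ← hA', inf_inf_inf_comm]
  have hs : P ⊔ Q ≤ (X ⊔ X') ⊓ bperp B (Y ⊓ Y') := by
    apply sup_le
    · exact le_inf (inf_le_left.trans le_sup_left)
        (inf_le_right.trans (bperp_antitone B inf_le_left))
    · exact le_inf (inf_le_left.trans le_sup_right)
        (inf_le_right.trans (bperp_antitone B inf_le_right))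
  have hPQ : Module.finrank K (P ⊔ Q : Submodule K V)
      + Module.finrank K (P ⊓ Q : Submodule K V)
      = Module.finrank K P + Module.finrank K Q :=
    Submodule.finrank_sup_add_finrank_inf_eq P Q
  have hsle : Module.finrank K (P ⊔ Q : Submodule K V)
      ≤ Module.finrank K ((X ⊔ X') ⊓ bperp B (Y ⊓ Y') : Submodule K V) :=
    Submodule.finrank_mono hs
  rw [hr] at h3
  omega
end
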